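/- arXiv:2407.18122 — 2 statements merged into one kernel-verified Lean document; each statement's English description precedes it below -/
import Mathlib

section
/- For n ≥ 1, a binary cyclic sequence s of length 2^{n+1} has linear complexity c(s) = 2^n + 1 if and only if s(i + 2^n) = s(i) + 1 for all i : ZMod 2^{n+1} (i.e., s has the form [X X̄], the concatenation of a word X of length 2^n with its bitwise complement). -/
/-- The operator `E + 1` on binary cyclic sequences of length `N`:
`((E + 1) s)(i) = s(i + 1) + s(i)`. -/
def dOp {N : ℕ} (s : ZMod N → ZMod 2) : ZMod N → ZMod 2 :=
  fun i => s (i + 1) + s i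

/-- The linear complexity of a binary cyclic sequence: the least `c ≥ 0` with
`(E + 1)^c s = 0`. -/
noncomputable def linComp {N : ℕ} (s : ZMod N → ZMod 2) : ℕ :=
  sInf {c : ℕ | dOp^[c] s = 0}

private lemma two_eq (x y : ZMod 2) : x + y + y = x := by
  revert x y; decide

private lemma dOp_pow {N : ℕ} (k : ℕ) (s : ZMod N → ZMod 2) (i : ZMod N) :
    dOp^[2 ^ k] s i = s (i + ((2 ^ k : ℕ) : ZMod N)) + s i := by
  induction k generalizing s i with
  | zero => simp [dOp]
  | succ k ih =>
    have h2 : 2 ^ (k + 1) = 2 ^ k + 2 ^ k := by ring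
    have hc : i + ((2 ^ k + 2 ^ k : ℕ) : ZMod N)
        = i + ((2 ^ k : ℕ) : ZMod N) + ((2 ^ k : ℕ) : ZMod N) := by push_cast; ring
    rw [h2, Function.iterate_add_apply, ih (dOp^[2 ^ k] s) i, ih, ih, hc,
      ← add_assoc (s (i + ((2 ^ k : ℕ) : ZMod N) + ((2 ^ k : ℕ) : ZMod N)) + s (i + ((2 ^ k : ℕ) : ZMod N))),
      two_eq]

private lemma dOp_zero {N : ℕ} : dOp (0 : ZMod N → ZMod 2) = 0 := by
  funext i; simp [dOp]

private lemma dOp_mono {N : ℕ} {s : ZMod N → ZMod 2} {c d : ℕ} (h : c ≤ d)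
    (hc : dOp^[c] s = 0) : dOp^[d] s = 0 := by
  obtain ⟨e, rfl⟩ := Nat.exists_eq_add_of_le h
  rw [Nat.add_comm, Function.iterate_add_apply, hc, Function.iterate_fixed dOp_zero]

theorem stmt_3 (n : ℕ) (hn : 1 ≤ n) (s : ZMod (2 ^ (n + 1)) → ZMod 2) :
    linComp s = 2 ^ n + 1 ↔
      ∀ i : ZMod (2 ^ (n + 1)), s (i + ((2 ^ n : ℕ) : ZMod (2 ^ (n + 1)))) = s i + 1 := by
  have hN : NeZero (2 ^ (n + 1)) := ⟨by positivity⟩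
  have hts : dOp^[2 ^ n] s
      = fun i => s (i + ((2 ^ n : ℕ) : ZMod (2 ^ (n + 1)))) + s i := by
    funext i; exact dOp_pow n s i
  constructor
  · intro h i
    have hne : {c : ℕ | dOp^[c] s = 0}.Nonempty := by
      by_contra hc
      rw [Set.not_nonempty_iff_eq_empty] at hc
      simp only [linComp, hc, Nat.sInf_empty] at h
      exact Nat.succ_ne_zero _ h.symm
    have hmem : dOp^[2 ^ n + 1] s = 0 := by
      have := Nat.sInf_mem hne
      simp only [linComp] at h
      rwa [h] at this
    have hnot : dOp^[2 ^ n] s ≠ 0 := by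
      intro hz
      have hle := Nat.sInf_le (show 2 ^ n ∈ {c : ℕ | dOp^[c] s = 0} from hz)
      simp only [linComp] at h
      exact Nat.not_succ_le_self _ (h ▸ hle)
    have hdt : dOp (dOp^[2 ^ n] s) = 0 := by
      rw [← Function.iterate_succ_apply' dOp]; exact hmem
    have hconst : ∀ j, dOp^[2 ^ n] s (j + 1) = dOp^[2 ^ n] s j := by
      intro j
      have h0 := congrFun hdt j
      simp only [dOp, Pi.zero_apply] at h0
      have h2 := two_eq (dOp^[2 ^ n] s (j + 1)) (dOp^[2 ^ n] s j)
      rw [h0, zero_add] at h2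
      exact h2.symm
    have hcast : ∀ k : ℕ, dOp^[2 ^ n] s ((k : ZMod (2 ^ (n + 1)))) = dOp^[2 ^ n] s 0 := by
      intro k
      induction k with
      | zero => simp
      | succ k ih => push_cast; rw [hconst]; exact ih
    have hall : ∀ j, dOp^[2 ^ n] s j = dOp^[2 ^ n] s 0 := by
      intro j
      have hj := hcast j.val
      rwa [ZMod.natCast_val, ZMod.cast_id] at hj
    have ht0 : dOp^[2 ^ n] s 0 = 1 := by
      rcases (show ∀ x : ZMod 2, x = 0 ∨ x = 1 by decide) (dOp^[2 ^ n] s 0) with h0 | h1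
      · exact absurd (funext fun j => by rw [hall j, h0]; rfl) hnot
      · exact h1
    have hti : s (i + ((2 ^ n : ℕ) : ZMod (2 ^ (n + 1)))) + s i = 1 := by
      have := hall i
      rw [ht0, hts] at this
      exact this
    calc s (i + ((2 ^ n : ℕ) : ZMod (2 ^ (n + 1))))
        = s (i + ((2 ^ n : ℕ) : ZMod (2 ^ (n + 1)))) + s i + s i := (two_eq _ _).symm
      _ = s i + 1 := by rw [hti]; exact add_comm 1 (s i)
  · intro h
    have ht1 : dOp^[2 ^ n] s = fun _ => 1 := by
      rw [hts]; funext i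
      rw [h i, add_comm (s i) 1]
      exact two_eq 1 (s i)
    have hmem : dOp^[2 ^ n + 1] s = 0 := by
      rw [Function.iterate_succ_apply', ht1]
      funext i; simp only [dOp, Pi.zero_apply]; decide
    have hnot : dOp^[2 ^ n] s ≠ 0 := by
      rw [ht1]
      intro hz
      have := congrFun hz 0
      simp at this
    apply le_antisymm
    · exact Nat.sInf_le hmem
    · by_contra hlt
      push_neg at hlt
      have hle : linComp s ≤ 2 ^ n := by omega
      have hne : {c : ℕ | dOp^[c] s = 0}.Nonempty := ⟨_, hmem⟩
      exact hnot (dOp_mono hle (Nat.sInf_mem hne))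
end

section
/- Let k, n, m be integers with k, n, m ≥ 2 and suppose there exists a (2^k, 2^m; n, m)-de Bruijn array code of size Δ in which every column of every codeword has even weight. Then there exists a (2^k, 2^m; n + 1, m)-de Bruijn array code of size 2^m · Δ. -/
/-- `C` is an `(r, s; n, m)`-de Bruijn array code of size `Δ`: every `n × m` binary
matrix appears exactly once as a window in exactly one codeword. -/
def IsDBAC (r s n m Δ : ℕ) (C : Fin Δ → (ZMod r × ZMod s → ZMod 2)) : Prop :=
  ∀ M : Fin n → Fin m → ZMod 2,
    ∃! p : Fin Δ × ZMod r × ZMod s,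
      ∀ (x : Fin n) (y : Fin m),
        C p.1 (p.2.1 + (x : ℕ), p.2.2 + (y : ℕ)) = M x y

/-- The weight of the `j`-th column of a doubly-periodic array `A`. -/
noncomputable def colWeight {r s : ℕ} (A : ZMod r × ZMod s → ZMod 2) (j : ZMod s) : ℕ :=
  {i : ZMod r | A (i, j) = 1}.ncard

/-!
Split an `(n + 1) × m` window into its first row and its `n × m` array of row differences.
Since every column of a codeword has even weight, its vertical partial sums are periodic, so
each codeword has a vertical "integral" whose row differences are the codeword itself. Adding
to it a sequence `g` depending only on the column leaves the row differences unchanged and adds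
a window of `g` to the first row. The `2 ^ m` sequences `g_u(j) = ∑ i, (j choose i) * u i`,
`u : Fin m → ZMod 2`, are `2 ^ m`-periodic by Lucas' theorem, and their length-`m` window at
any position `j` is an invertible linear function of `u` (the matrix `((j + y) choose i)` has
determinant 1), so each first row is produced by exactly one `u`.
-/

open Finset

section Windows

variable {α : Type*} {r s : ℕ}

def window (n m : ℕ) (A : ZMod r × ZMod s → α) (p : ZMod r × ZMod s) : Fin n → Fin m → α :=
  fun x y => A (p.1 + (x : ℕ), p.2 + (y : ℕ))

def IsWindowCode {ι : Type*} (n m : ℕ) (C : ι → ZMod r × ZMod s → α) : Prop :=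
  ∀ M : Fin n → Fin m → α, ∃! q : ι × (ZMod r × ZMod s), window n m (C q.1) q.2 = M

def IsWindowTransversal {κ : Type*} (m : ℕ) (G : κ → ZMod s → α) : Prop :=
  ∀ (j : ZMod s) (v : Fin m → α), ∃! t, (fun y : Fin m => G t (j + (y : ℕ))) = v

theorem isDBAC_iff_isWindowCode {n m Δ : ℕ} (C : Fin Δ → ZMod r × ZMod s → ZMod 2) :
    IsDBAC r s n m Δ C ↔ IsWindowCode n m C := by
  simp only [IsDBAC, IsWindowCode, window, funext_iff]

theorem IsWindowCode.comp_equiv {ι κ : Type*} {n m : ℕ} {C : ι → ZMod r × ZMod s → α}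
    (hC : IsWindowCode n m C) (e : κ ≃ ι) : IsWindowCode n m (C ∘ e) := fun M =>
  ((e.prodCongr (Equiv.refl _)).existsUnique_congr fun _ => Iff.rfl).2 (hC M)

def rowDiff [Sub α] {n m : ℕ} (M : Fin (n + 1) → Fin m → α) : Fin n → Fin m → α :=
  fun x y => M x.succ y - M x.castSucc y

theorem window_succ_eq_iff [AddCommGroup α] {n m : ℕ} {A B : ZMod r × ZMod s → α}
    (hB : ∀ i j, B (i + 1, j) = B (i, j) + A (i, j)) (p : ZMod r × ZMod s)
    (M : Fin (n + 1) → Fin m → α) :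
    window (n + 1) m B p = M ↔
      window n m A p = rowDiff M ∧ (fun y : Fin m => B (p.1, p.2 + (y : ℕ))) = M 0 := by
  have hstep : ∀ (x : Fin n) (y : Fin m),
      window (n + 1) m B p x.succ y = window (n + 1) m B p x.castSucc y + window n m A p x y := by
    intro x y
    simp only [window, Fin.val_succ, Fin.val_castSucc, Nat.cast_succ, ← add_assoc, hB]
  constructor
  · rintro rfl
    refine ⟨?_, ?_⟩
    · ext x y
      simp only [rowDiff, hstep, add_sub_cancel_left]
    · ext y
      simp [window]
  · rintro ⟨hA, h0⟩
    funext x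
    induction x using Fin.induction with
    | zero => ext y; simpa [window] using congrFun h0 y
    | succ x ih =>
      ext y
      rw [hstep, ih, hA]
      exact add_sub_cancel _ _

end Windows

section ColIntegral

variable {α : Type*} [AddCommGroup α] {r s : ℕ}

theorem sum_range_eq_sum_zmod {β : Type*} [AddCommMonoid β] [NeZero r] (f : ZMod r → β) :
    ∑ l ∈ range r, f l = ∑ z : ZMod r, f z :=
  (sum_nbij' ZMod.val (↑) (fun z _ => mem_range.2 z.val_lt) (by simp)
    (fun z _ => ZMod.natCast_zmod_val z) (fun l hl => ZMod.val_natCast_of_lt (mem_range.1 hl))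
    (by simp)).symm

def colPartialSum (A : ZMod r × ZMod s → α) (j : ZMod s) (a : ℕ) : α :=
  ∑ l ∈ range a, A (l, j)

def colIntegral (A : ZMod r × ZMod s → α) : ZMod r × ZMod s → α :=
  fun p => colPartialSum A p.2 p.1.val

theorem colPartialSum_periodic [NeZero r] {A : ZMod r × ZMod s → α} {j : ZMod s}
    (h : ∑ i, A (i, j) = 0) : Function.Periodic (colPartialSum A j) r := by
  intro a
  simp only [colPartialSum]
  rw [add_comm, sum_range_add, sum_range_eq_sum_zmod (fun i => A (i, j)), h, zero_add]
  simp

theorem colIntegral_natCast [NeZero r] {A : ZMod r × ZMod s → α} {j : ZMod s}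
    (h : ∑ i, A (i, j) = 0) (a : ℕ) : colIntegral A (a, j) = colPartialSum A j a := by
  rw [colIntegral, ZMod.val_natCast, (colPartialSum_periodic h).map_mod_nat]

theorem colIntegral_add_one [NeZero r] {A : ZMod r × ZMod s → α}
    (h : ∀ j, ∑ i, A (i, j) = 0) (i : ZMod r) (j : ZMod s) :
    colIntegral A (i + 1, j) = colIntegral A (i, j) + A (i, j) := by
  conv_lhs => rw [← ZMod.natCast_zmod_val i, ← Nat.cast_succ]
  rw [colIntegral_natCast (h j), colPartialSum, sum_range_succ, ZMod.natCast_zmod_val]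
  rfl

end ColIntegral

theorem IsWindowCode.colIntegral_add {α ι κ : Type*} [AddCommGroup α] {r s n m : ℕ} [NeZero r]
    {C : ι → ZMod r × ZMod s → α} (hC : IsWindowCode n m C)
    (hsum : ∀ c j, ∑ i, C c (i, j) = 0) {G : κ → ZMod s → α} (hG : IsWindowTransversal m G) :
    IsWindowCode (n + 1) m fun q : κ × ι => fun p => colIntegral (C q.2) p + G q.1 p.2 := by
  have hstep : ∀ (q : κ × ι) i j, colIntegral (C q.2) (i + 1, j) + G q.1 j =
      colIntegral (C q.2) (i, j) + G q.1 j + C q.2 (i, j) := fun q i j => by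
    rw [colIntegral_add_one (hsum q.2), add_right_comm]
  have hwin := fun q => window_succ_eq_iff (n := n) (m := m)
    (B := fun p => colIntegral (C q.2) p + G q.1 p.2) (hstep q)
  intro M
  obtain ⟨⟨c, p⟩, hp, hp_unique⟩ := hC (rowDiff M)
  obtain ⟨t, ht, ht_unique⟩ :=
    hG p.2 fun y => M 0 y - colIntegral (C c) (p.1, p.2 + (y : ℕ))
  have hrow0 : ∀ t', (fun y : Fin m => colIntegral (C c) (p.1, p.2 + (y : ℕ)) + G t' (p.2 + y))
      = M 0 ↔ (fun y : Fin m => G t' (p.2 + (y : ℕ))) =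
        fun y => M 0 y - colIntegral (C c) (p.1, p.2 + (y : ℕ)) := fun t' => by
    simp only [funext_iff, eq_sub_iff_add_eq']
  refine ⟨((t, c), p), (hwin (t, c) p M).2 ⟨hp, (hrow0 t).2 ht⟩, ?_⟩
  rintro ⟨⟨t', c'⟩, p'⟩ h
  obtain ⟨hA, h0⟩ := (hwin (t', c') p' M).1 h
  obtain ⟨rfl, rfl⟩ := Prod.ext_iff.1 (hp_unique (c', p') hA)
  rw [ht_unique t' ((hrow0 t').1 h0)]

theorem cast_choose_mod_prime_pow {p : ℕ} [Fact p.Prime] {m k : ℕ} (n : ℕ) (hk : k < p ^ m) :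
    ((n % p ^ m).choose k : ZMod p) = n.choose k := by
  have hdigit : ∀ i ∈ range m, n % p ^ m / p ^ i % p = n / p ^ i % p := by
    intro i hi
    obtain ⟨d, hd⟩ := Nat.exists_eq_add_of_lt (mem_range.1 hi)
    rw [hd, add_assoc, pow_add, Nat.mod_mul_right_div_self,
      Nat.mod_mod_of_dvd _ (dvd_pow_self p d.succ_ne_zero)]
  have hlow :=
    Choose.choose_modEq_choose_mul_prod_range_choose (n := n % p ^ m) (k := k) (p := p) m
  have hfull := Choose.choose_modEq_choose_mul_prod_range_choose (n := n) (k := k) (p := p) m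
  rw [Nat.div_eq_of_lt hk, Nat.choose_zero_right, prod_congr rfl fun i hi => by rw [hdigit i hi]]
    at hlow
  rw [Nat.div_eq_of_lt hk, Nat.choose_zero_right] at hfull
  rw [← ZMod.intCast_eq_intCast_iff] at hlow hfull
  exact_mod_cast hlow.trans hfull.symm

theorem det_choose_add (R : Type*) [CommRing R] (m j : ℕ) :
    (Matrix.of fun y i : Fin m => ((j + y : ℕ).choose i : R)).det = 1 := by
  let L : Matrix (Fin m) (Fin m) R := Matrix.of fun y l => ((y : ℕ).choose l : R)
  let U : Matrix (Fin m) (Fin m) R :=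
    Matrix.of fun l i => if l ≤ i then (j.choose (i - l) : R) else 0
  -- Vandermonde's identity
  have hLU : (Matrix.of fun y i : Fin m => ((j + y : ℕ).choose i : R)) = L * U := by
    ext y i
    have hrange : range (i + 1) = (range m).filter (· ≤ (i : ℕ)) := by
      ext l; simp only [mem_range, mem_filter]; omega
    rw [Matrix.of_apply, add_comm, Nat.add_choose_eq, Nat.sum_antidiagonal_eq_sum_range_succ_mk,
      hrange, sum_filter, ← Fin.sum_univ_eq_sum_range, Nat.cast_sum]
    simp only [Matrix.mul_apply, L, U, Matrix.of_apply, mul_ite, mul_zero, Fin.le_iff_val_le_val]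
    push_cast
    rfl
  have hL : L.det = 1 := by
    rw [Matrix.det_of_isLowerTriangular L fun y l (h : y < l) => by
      simp [L, Nat.choose_eq_zero_of_lt h]]
    simp [L]
  have hU : U.det = 1 := by
    rw [Matrix.det_of_isUpperTriangular fun l i (h : i < l) => by simp [U, not_le.2 h]]
    simp [U]
  rw [hLU, Matrix.det_mul, hL, hU, mul_one]

def binomSeq (p m : ℕ) (u : Fin m → ZMod p) (j : ZMod (p ^ m)) : ZMod p :=
  ∑ i : Fin m, (j.val.choose i : ZMod p) * u i

section BinomialSequences

variable {p : ℕ} [Fact p.Prime] {m : ℕ}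

theorem binomSeq_add_natCast (u : Fin m → ZMod p) (j : ZMod (p ^ m)) (y : ℕ) :
    binomSeq p m u (j + y) = ∑ i : Fin m, ((j.val + y).choose i : ZMod p) * u i := by
  have hi : ∀ i : Fin m, (i : ℕ) < p ^ m :=
    fun i => i.2.trans (Nat.lt_pow_self (Fact.out : p.Prime).one_lt)
  rw [binomSeq, ← ZMod.natCast_zmod_val j, ← Nat.cast_add, ZMod.val_natCast, ZMod.natCast_zmod_val]
  simp only [cast_choose_mod_prime_pow _ (hi _)]

theorem isWindowTransversal_binomSeq : IsWindowTransversal m (binomSeq p m) := by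
  intro j v
  let W : Matrix (Fin m) (Fin m) (ZMod p) := Matrix.of fun y i => ((j.val + y).choose i : ZMod p)
  have hW : IsUnit W := by
    rw [Matrix.isUnit_iff_isUnit_det, det_choose_add]
    exact isUnit_one
  have hwindow : (fun u (y : Fin m) => binomSeq p m u (j + (y : ℕ))) = W.mulVec := by
    ext u y
    simp [binomSeq_add_natCast, W, Matrix.mulVec, dotProduct]
  have hbij : Function.Bijective fun u (y : Fin m) => binomSeq p m u (j + (y : ℕ)) := by
    rw [hwindow]
    exact ⟨Matrix.mulVec_injective_iff_isUnit.2 hW, Matrix.mulVec_surjective_iff_isUnit.2 hW⟩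
  exact hbij.existsUnique v

end BinomialSequences

theorem sum_col_eq_zero_of_even_colWeight {r s : ℕ} [NeZero r] {A : ZMod r × ZMod s → ZMod 2}
    {j : ZMod s} (h : Even (colWeight A j)) : ∑ i, A (i, j) = 0 := by
  classical
  have hbool : ∀ a : ZMod 2, a = if a = 1 then 1 else 0 := by decide
  rw [sum_congr rfl fun i _ => hbool (A (i, j)), sum_boole, ZMod.natCast_eq_zero_iff_even]
  rwa [colWeight, Set.ncard_eq_toFinset_card', Set.toFinset_ofPred] at h

theorem stmt_11_general (k n m Δ : ℕ)
    (C : Fin Δ → (ZMod (2 ^ k) × ZMod (2 ^ m) → ZMod 2))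
    (hC : IsDBAC (2 ^ k) (2 ^ m) n m Δ C)
    (heven : ∀ c, ∀ j : ZMod (2 ^ m), Even (colWeight (C c) j)) :
    ∃ C' : Fin (2 ^ m * Δ) → (ZMod (2 ^ k) × ZMod (2 ^ m) → ZMod 2),
      IsDBAC (2 ^ k) (2 ^ m) (n + 1) m (2 ^ m * Δ) C' := by
  have hlift := ((isDBAC_iff_isWindowCode C).1 hC).colIntegral_add
    (fun c j => sum_col_eq_zero_of_even_colWeight (heven c j)) isWindowTransversal_binomSeq
  let e : Fin (2 ^ m * Δ) ≃ (Fin m → ZMod 2) × Fin Δ := Fintype.equivOfCardEq (by simp)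
  exact ⟨_, (isDBAC_iff_isWindowCode _).2 (hlift.comp_equiv e)⟩

theorem stmt_11 (k n m Δ : ℕ) (hk : 2 ≤ k) (hn : 2 ≤ n) (hm : 2 ≤ m)
    (C : Fin Δ → (ZMod (2 ^ k) × ZMod (2 ^ m) → ZMod 2))
    (hC : IsDBAC (2 ^ k) (2 ^ m) n m Δ C)
    (heven : ∀ c, ∀ j : ZMod (2 ^ m), Even (colWeight (C c) j)) :
    ∃ C' : Fin (2 ^ m * Δ) → (ZMod (2 ^ k) × ZMod (2 ^ m) → ZMod 2),
      IsDBAC (2 ^ k) (2 ^ m) (n + 1) m (2 ^ m * Δ) C' :=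
  stmt_11_general k n m Δ C hC heven
end
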